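/- arXiv:1409.7020 — 4 statements merged into one kernel-verified Lean document; each statement's English description precedes it below -/
import Mathlib

section
/- Let G be a finite simple graph on vertex set {x_1,...,x_n}, let I = I(G) be its edge ideal in R = k[x_1,...,x_n], and let {x,y} be an edge of G. Then (I^2 : xy) = (I, E), where E is the ideal of R generated by all monomials x_i y_j with x_i ∈ N(x) and y_j ∈ N(y). -/
/-!
All ideals involved are monomial ideals, so it suffices to compare exponent vectors.
A monomial `m` lies in `(I² : xy)` iff `m·xy` is divisible by a product `e₁e₂` of two edges.
An edge that misses `{x, y}` already divides `m`. Otherwise write `e₁ = zw`, `e₂ = z'w'` with `z, z' ∈ {x, y}`: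
if `z ≠ z'`, say `z = x`, `z' = y`, then `ww' ∈ E` divides `m`; if `z = z' = x`, then whichever
of `xw`, `xw'` avoids `y` divides `m`.
-/

open MvPolynomial

/-- The edge ideal of a (simple) graph `G`: the ideal of the polynomial ring generated by
the monomials `X i * X j` for the edges `{i, j}` of `G`. -/
noncomputable def edgeIdeal (k : Type*) [Field k] {σ : Type*} (G : SimpleGraph σ) :
    Ideal (MvPolynomial σ k) :=
  Ideal.span {m | ∃ i j, G.Adj i j ∧ m = X i * X j}

/-- The maximal homogeneous ideal `(x_1, ..., x_n)` of the polynomial ring. -/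
noncomputable def maxIdeal (k : Type*) [Field k] (σ : Type*) : Ideal (MvPolynomial σ k) :=
  Ideal.span (Set.range X)

/-- `qdepth k J` is `depth R/J`: the maximal length of an `R/J`-regular sequence contained
in the maximal homogeneous ideal `(x_1, ..., x_n)` of `R = k[x_1, ..., x_n]`. -/
noncomputable def qdepth (k : Type*) [Field k] {σ : Type*} (J : Ideal (MvPolynomial σ k)) : ℕ :=
  sSup {r | ∃ s : List (MvPolynomial σ k), s.length = r ∧
    (∀ x ∈ s, x ∈ maxIdeal k σ) ∧
    RingTheory.Sequence.IsRegular (MvPolynomial σ k ⧸ J) s}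

open Finsupp
open scoped Pointwise

section Exponents

variable {σ : Type*}

noncomputable def pairExp (i j : σ) : σ →₀ ℕ := single i 1 + single j 1

theorem pairExp_comm (i j : σ) : pairExp i j = pairExp j i := add_comm _ _

theorem eq_or_eq_of_mem_support_pairExp {i j v : σ} (hv : v ∈ (pairExp i j).support) :
    v = i ∨ v = j := by
  classical
  rcases Finset.mem_union.1 (Finsupp.support_add hv) with h | h
  · exact .inl (Finset.mem_singleton.1 (support_single_subset h))
  · exact .inr (Finset.mem_singleton.1 (support_single_subset h))

theorem Finsupp.le_of_le_add_of_disjoint {s t u : σ →₀ ℕ} (h : s ≤ u + t)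
    (hst : Disjoint s.support t.support) : s ≤ u := by
  intro v
  by_cases hv : v ∈ t.support
  · rw [notMem_support_iff.1 (Finset.disjoint_right.1 hst hv)]
    exact Nat.zero_le _
  · simpa [notMem_support_iff.1 hv] using h v

variable {G : SimpleGraph σ} {x y : σ} {u : σ →₀ ℕ}

theorem pairExp_le_of_ne_of_add_le {a b : σ} {s : σ →₀ ℕ}
    (hne : x ≠ a ∧ x ≠ b ∧ y ≠ a ∧ y ≠ b) (h : pairExp a b + s ≤ u + pairExp x y) :
    pairExp a b ≤ u := by
  refine le_of_le_add_of_disjoint (le_self_add.trans h)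
    (Finset.disjoint_left.2 fun v hab hxy => ?_)
  rcases eq_or_eq_of_mem_support_pairExp hab with rfl | rfl <;>
    rcases eq_or_eq_of_mem_support_pairExp hxy with rfl | rfl <;> simp_all

theorem pairExp_le_of_pairExp_add_pairExp_le {w w' : σ}
    (h : pairExp x w + pairExp y w' ≤ u + pairExp x y) : pairExp w w' ≤ u := by
  have : pairExp x w + pairExp y w' = pairExp w w' + pairExp x y := by
    simp only [pairExp]; abel
  exact le_of_add_le_add_right (this ▸ h)

theorem exists_adj_pairExp_le_of_shared_vertex {w w' : σ} (hxy : G.Adj x y) (hw : G.Adj x w)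
    (hw' : G.Adj x w') (h : pairExp x w + pairExp x w' ≤ u + pairExp x y) :
    ∃ i j, G.Adj i j ∧ pairExp i j ≤ u := by
  by_cases hwy : w = y
  · subst hwy
    exact ⟨x, w', hw', le_of_add_le_add_left (add_comm u _ ▸ h)⟩
  by_cases hw'y : w' = y
  · subst hw'y
    exact ⟨x, w, hw, le_of_add_le_add_right (by rwa [add_comm u] at h)⟩
  refine ⟨x, w, hw, le_of_le_add_of_disjoint (t := single y 1) ?_ ?_⟩
  · have : pairExp x w + single w' 1 + single x 1 ≤ u + single y 1 + single x 1 := by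
      convert h using 1 <;> simp only [pairExp] <;> abel
    exact le_self_add.trans (le_of_add_le_add_right this)
  · refine Finset.disjoint_of_subset_right support_single_subset
      (Finset.disjoint_singleton_right.2 fun hy => ?_)
    rcases eq_or_eq_of_mem_support_pairExp hy with h | h
    · exact hxy.ne h.symm
    · exact hwy h.symm

theorem exists_pairExp_eq_of_meets {a b : σ} (hab : G.Adj a b)
    (hmeet : x = a ∨ x = b ∨ y = a ∨ y = b) :
    ∃ z w, (z = x ∨ z = y) ∧ G.Adj z w ∧ pairExp a b = pairExp z w := by
  rcases hmeet with rfl | rfl | rfl | rfl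
  · exact ⟨_, b, .inl rfl, hab, rfl⟩
  · exact ⟨_, a, .inl rfl, hab.symm, pairExp_comm _ _⟩
  · exact ⟨_, b, .inr rfl, hab, rfl⟩
  · exact ⟨_, a, .inr rfl, hab.symm, pairExp_comm _ _⟩

theorem exists_le_of_pairExp_add_pairExp_le {a b c d : σ} (hxy : G.Adj x y) (hab : G.Adj a b)
    (hcd : G.Adj c d) (h : pairExp a b + pairExp c d ≤ u + pairExp x y) :
    (∃ i j, G.Adj i j ∧ pairExp i j ≤ u) ∨ ∃ i j, G.Adj x i ∧ G.Adj y j ∧ pairExp i j ≤ u := by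
  by_cases hab' : x = a ∨ x = b ∨ y = a ∨ y = b
  swap
  · push Not at hab'
    exact .inl ⟨a, b, hab, pairExp_le_of_ne_of_add_le hab' h⟩
  by_cases hcd' : x = c ∨ x = d ∨ y = c ∨ y = d
  swap
  · push Not at hcd'
    exact .inl ⟨c, d, hcd, pairExp_le_of_ne_of_add_le hcd' (by rwa [add_comm] at h)⟩
  obtain ⟨z, w, hz, hw, hab_eq⟩ := exists_pairExp_eq_of_meets hab hab'
  obtain ⟨z', w', hz', hw', hcd_eq⟩ := exists_pairExp_eq_of_meets hcd hcd'
  rw [hab_eq, hcd_eq] at h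
  rcases hz with rfl | rfl <;> rcases hz' with rfl | rfl
  · exact .inl (exists_adj_pairExp_le_of_shared_vertex hxy hw hw' h)
  · exact .inr ⟨w, w', hw, hw', pairExp_le_of_pairExp_add_pairExp_le h⟩
  · exact .inr ⟨w', w, hw', hw, pairExp_le_of_pairExp_add_pairExp_le (by rwa [add_comm] at h)⟩
  · exact .inl
      (exists_adj_pairExp_le_of_shared_vertex hxy.symm hw hw' (by rwa [pairExp_comm x] at h))

end Exponents

section MonomialIdeals

variable {σ R : Type*} [CommSemiring R]

def pairExps (r : σ → σ → Prop) : Set (σ →₀ ℕ) := {e | ∃ i j, r i j ∧ e = pairExp i j}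

theorem monomial_pairExp (i j : σ) : monomial (pairExp i j) (1 : R) = X i * X j := by
  rw [pairExp, X, X, monomial_mul, one_mul]

theorem setOf_X_mul_X_eq_image (r : σ → σ → Prop) :
    {m : MvPolynomial σ R | ∃ i j, r i j ∧ m = X i * X j} = (monomial · 1) '' pairExps r := by
  ext m
  simp only [pairExps, Set.mem_ofPred_eq, Set.mem_image]
  constructor
  · rintro ⟨i, j, hij, rfl⟩
    exact ⟨_, ⟨i, j, hij, rfl⟩, monomial_pairExp i j⟩
  · rintro ⟨_, ⟨i, j, hij, rfl⟩, rfl⟩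
    exact ⟨i, j, hij, monomial_pairExp i j⟩

theorem monomial_one_image_mul_image (A B : Set (σ →₀ ℕ)) :
    (monomial · (1 : R)) '' A * (monomial · 1) '' B = (monomial · 1) '' (A + B) :=
  (Set.image_image2_distrib fun a b => by rw [monomial_mul, one_mul]).symm

theorem exists_le_add_of_mul_monomial_mem {f : MvPolynomial σ R} {e : σ →₀ ℕ}
    {S : Set (σ →₀ ℕ)} (hf : f * monomial e 1 ∈ Ideal.span ((monomial · 1) '' S))
    {d : σ →₀ ℕ} (hd : d ∈ f.support) : ∃ s ∈ S, s ≤ d + e := by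
  refine mem_ideal_span_monomial_image.1 hf _ ?_
  rwa [MvPolynomial.mem_support_iff, coeff_mul_monomial, mul_one,
    ← MvPolynomial.mem_support_iff]

end MonomialIdeals

theorem edgeIdeal_eq_span_monomial (k : Type*) [Field k] {σ : Type*} (G : SimpleGraph σ) :
    edgeIdeal k G = Ideal.span ((monomial · 1) '' pairExps G.Adj) := by
  rw [edgeIdeal, setOf_X_mul_X_eq_image]

/-- **Lemma (colon of the square by an edge).** If `{x, y}` is an edge of `G`, then
`(I² : xy) = (I, E)` where `E` is generated by the monomials `x_i y_j` with
`x_i ∈ N(x)` and `y_j ∈ N(y)`. -/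
theorem sq_edgeIdeal_colon_edge (k : Type*) [Field k] {n : ℕ}
    (G : SimpleGraph (Fin n)) (x y : Fin n) (hxy : G.Adj x y) :
    (edgeIdeal k G ^ 2).colon ((Ideal.span {X x * X y} : Ideal (MvPolynomial (Fin n) k)) : Set (MvPolynomial (Fin n) k)) =
      edgeIdeal k G ⊔
        Ideal.span {m : MvPolynomial (Fin n) k |
          ∃ i j : Fin n, G.Adj x i ∧ G.Adj y j ∧ m = X i * X j} := by
  have hI := edgeIdeal_eq_span_monomial k G
  have hE : Ideal.span {m : MvPolynomial (Fin n) k |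
        ∃ i j, G.Adj x i ∧ G.Adj y j ∧ m = X i * X j} =
      Ideal.span ((monomial · 1) '' pairExps fun i j => G.Adj x i ∧ G.Adj y j) := by
    simp only [← setOf_X_mul_X_eq_image, and_assoc]
  have edge_mem {i j} (hij : G.Adj i j) : X i * X j ∈ edgeIdeal k G :=
    Ideal.subset_span ⟨i, j, hij, rfl⟩
  refine le_antisymm (fun f hf => ?_) (sup_le (fun f hf => ?_) (Ideal.span_le.2 ?_))
  · rw [Ideal.mem_colon_span_singleton, ← monomial_pairExp, sq, hI, Ideal.span_mul_span',
      monomial_one_image_mul_image] at hf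
    rw [hE, hI, ← Ideal.span_union, ← Set.image_union, mem_ideal_span_monomial_image]
    intro d hd
    obtain ⟨_, ⟨_, ⟨a, b, hab, rfl⟩, _, ⟨c, e, hce, rfl⟩, rfl⟩, hle⟩ :=
      exists_le_add_of_mul_monomial_mem hf hd
    rcases exists_le_of_pairExp_add_pairExp_le hxy hab hce hle with
      ⟨i, j, hij, hle⟩ | ⟨i, j, hi, hj, hle⟩
    exacts [⟨_, .inl ⟨i, j, hij, rfl⟩, hle⟩, ⟨_, .inr ⟨i, j, ⟨hi, hj⟩, rfl⟩, hle⟩]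
  · exact Ideal.mem_colon_span_singleton.2
      (sq (edgeIdeal k G) ▸ Ideal.mul_mem_mul hf (edge_mem hxy))
  · rintro _ ⟨i, j, hi, hj, rfl⟩
    rw [SetLike.mem_coe, Ideal.mem_colon_span_singleton, sq,
      show X i * X j * (X x * X y) = X x * X i * (X y * X j) by ring]
    exact Ideal.mul_mem_mul (edge_mem hi) (edge_mem hj)
end

section
/- Let G be a finite simple graph on vertex set {x_1,...,x_n}, let I = I(G) be its edge ideal in R = k[x_1,...,x_n], let t ≥ 1, and let x_1,...,x_{2t} be vertices (not necessarily distinct) such that the monomial x_1⋯x_{2t} lies in I^t. Then (I^{t+1} : x_1⋯x_{2t}) = (I, E), where E is the ideal generated by all degree-two monomials y_1 y_2 supported on ⋃_{i=1}^{2t} N(x_i) satisfying y_1 y_2 x_1⋯x_{2t} ∈ I^{t+1}. -/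
open MvPolynomial

/-!
Write `M = x_1 ⋯ x_{2t}`. Since `M ∈ I^t` has degree `2t`, it is exactly a product of `t` edges
(the red edges). If `m M ∈ I^{t+1}` for a monomial `m`, then `t + 1` blue edges divide `m M`;
some blue edge `y₁ z` has `y₁` in `m`, and either `z` is in `m` as well, or `z` lies on a red
edge `z w` and swapping these two edges reduces to `m / y₁ * w` with one red edge less. This
produces `y₁ y₂ ∣ m` with `y₁ y₂ M ∈ I^{t+1}`. Either `y₁ y₂` is an edge, or, by a second
degree count, `y₁` and `y₂` are matched to vertices of `M` and so are neighbours of some `x_i`.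
-/

open Finsupp

section

variable {σ : Type*}

theorem Finsupp.eq_of_le_of_degree_le {a b : σ →₀ ℕ} (hab : a ≤ b) (h : degree b ≤ degree a) :
    a = b := by
  obtain ⟨c, rfl⟩ := exists_add_of_le hab
  rw [map_add] at h
  rw [(degree_eq_zero_iff c).1 (by omega), add_zero]

theorem Finsupp.le_of_le_add_single {p m : σ →₀ ℕ} {w : σ} {j : ℕ} (h : p ≤ m + single w j)
    (hw : p w = 0) : p ≤ m := by
  intro v
  by_cases hv : v = w
  · simp [hv, hw]
  · simpa [single_apply, Ne.symm hv] using h v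

theorem Finsupp.single_add_single_le_add_single {a b w : σ} {m : σ →₀ ℕ}
    (h : single a 1 + single b 1 ≤ m + single w 1) :
    single a 1 + single b 1 ≤ m ∨
      ∃ y, single y 1 ≤ m ∧ single a 1 + single b 1 = single y 1 + single w 1 := by
  by_cases ha : a = w
  · subst ha
    rw [add_comm m, add_le_add_iff_left] at h
    exact .inr ⟨b, h, add_comm _ _⟩
  by_cases hb : b = w
  · subst hb
    rw [add_le_add_iff_right] at h
    exact .inr ⟨a, h, rfl⟩
  · exact .inl (le_of_le_add_single h (by simp [Ne.symm ha, Ne.symm hb]))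

namespace SimpleGraph

variable (G : SimpleGraph σ)

def IsEdgeExponent (d : σ →₀ ℕ) : Prop :=
  ∃ a b, G.Adj a b ∧ d = single a 1 + single b 1

/-- `X ^ d ∈ I(G) ^ s`, see `monomial_mem_edgeIdeal_pow_iff`. -/
def EdgeProdLE (s : ℕ) (d : σ →₀ ℕ) : Prop :=
  ∃ B : Multiset (σ →₀ ℕ), (∀ e ∈ B, G.IsEdgeExponent e) ∧ B.card = s ∧ B.sum ≤ d

variable {G}

theorem IsEdgeExponent.exists_eq_of_pos {e : σ →₀ ℕ} (he : G.IsEdgeExponent e) {v : σ}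
    (hv : 0 < e v) : ∃ z, G.Adj v z ∧ e = single v 1 + single z 1 := by
  obtain ⟨a, b, hab, rfl⟩ := he
  by_cases hva : a = v
  · exact ⟨b, hva ▸ hab, hva ▸ rfl⟩
  by_cases hvb : b = v
  · exact ⟨a, hvb ▸ hab.symm, hvb ▸ add_comm _ _⟩
  · simp [hva, hvb] at hv

theorem degree_sum_of_isEdgeExponent {B : Multiset (σ →₀ ℕ)}
    (hB : ∀ e ∈ B, G.IsEdgeExponent e) : Finsupp.degree B.sum = 2 * B.card := by
  induction B using Multiset.induction with
  | empty => simp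
  | cons e B ih =>
    obtain ⟨a, b, -, rfl⟩ := hB e (Multiset.mem_cons_self e B)
    rw [Multiset.sum_cons, map_add, ih fun e he ↦ hB e (Multiset.mem_cons_of_mem he)]
    simp only [map_add, degree_single, Multiset.card_cons]
    ring

theorem exists_eq_cons_of_sum_pos {B : Multiset (σ →₀ ℕ)} (hB : ∀ e ∈ B, G.IsEdgeExponent e)
    {v : σ} (hv : 0 < B.sum v) :
    ∃ z B', G.Adj v z ∧ B = (single v 1 + single z 1) ::ₘ B' := by
  obtain ⟨e, heB, hev⟩ : ∃ e ∈ B, 0 < e v := by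
    by_contra! h
    have : B.sum v = 0 := by
      rw [← applyAddHom_apply, map_multiset_sum, Multiset.sum_eq_zero_iff]
      simpa using h
    omega
  obtain ⟨B', rfl⟩ := Multiset.exists_cons_of_mem heB
  obtain ⟨z, hvz, rfl⟩ := (hB e (Multiset.mem_cons_self e B')).exists_eq_of_pos hev
  exact ⟨z, B', hvz, rfl⟩

theorem EdgeProdLE.mono {s : ℕ} {d d' : σ →₀ ℕ} (h : G.EdgeProdLE s d) (hd : d ≤ d') :
    G.EdgeProdLE s d' :=
  let ⟨B, hB, hcard, hle⟩ := h
  ⟨B, hB, hcard, hle.trans hd⟩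

theorem EdgeProdLE.add_left {s : ℕ} {d e : σ →₀ ℕ} (h : G.EdgeProdLE s d)
    (he : G.IsEdgeExponent e) : G.EdgeProdLE (s + 1) (e + d) := by
  obtain ⟨B, hB, rfl, hle⟩ := h
  refine ⟨e ::ₘ B, ?_, Multiset.card_cons e B, ?_⟩
  · simpa [or_imp, forall_and] using ⟨he, hB⟩
  · simpa [Multiset.sum_cons] using hle

theorem edgeProdLE_card_sum {R : Multiset (σ →₀ ℕ)} (hR : ∀ e ∈ R, G.IsEdgeExponent e) :
    G.EdgeProdLE R.card R.sum :=
  ⟨R, hR, rfl, le_rfl⟩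

theorem exists_single_add_single_le_of_edgeProdLE {R : Multiset (σ →₀ ℕ)}
    (hR : ∀ e ∈ R, G.IsEdgeExponent e) {m : σ →₀ ℕ}
    (h : G.EdgeProdLE (R.card + 1) (m + R.sum)) :
    ∃ y₁ y₂, single y₁ 1 + single y₂ 1 ≤ m ∧
      G.EdgeProdLE (R.card + 1) (single y₁ 1 + single y₂ 1 + R.sum) := by
  induction R using Multiset.strongInductionOn generalizing m with
  | ih R ih =>
  obtain ⟨B, hB, hBcard, hBle⟩ := h
  obtain ⟨y₁, hy₁⟩ : ∃ v, R.sum v < B.sum v := by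
    by_contra! hle
    have := Finsupp.degree_mono (show B.sum ≤ R.sum from hle)
    rw [degree_sum_of_isEdgeExponent hB, degree_sum_of_isEdgeExponent hR] at this
    omega
  obtain ⟨z, B', hy₁z, rfl⟩ := exists_eq_cons_of_sum_pos hB (by omega : 0 < B.sum y₁)
  obtain ⟨m₀, rfl⟩ : ∃ m₀, m = single y₁ 1 + m₀ := by
    refine exists_add_of_le (single_le_iff.2 ?_)
    have := hBle y₁
    simp only [Finsupp.add_apply] at this
    omega
  have hzB' : single z 1 + B'.sum ≤ m₀ + R.sum := by
    rw [Multiset.sum_cons, add_assoc, add_assoc] at hBle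
    exact le_of_add_le_add_left hBle
  by_cases hz : single z 1 ≤ m₀
  · exact ⟨y₁, z, add_le_add le_rfl hz, (edgeProdLE_card_sum hR).add_left ⟨y₁, z, hy₁z, rfl⟩⟩
  obtain ⟨w, R', hzw, rfl⟩ := exists_eq_cons_of_sum_pos hR (v := z) (by
    have := hzB' z
    simp only [single_le_iff, not_le, Finsupp.add_apply, single_eq_same] at hz this
    omega)
  have hB' : G.EdgeProdLE (R'.card + 1) (m₀ + single w 1 + R'.sum) := by
    refine ⟨B', fun e he ↦ hB e (Multiset.mem_cons_of_mem he), by simpa using hBcard, ?_⟩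
    refine le_of_add_le_add_left (a := single z 1) (hzB'.trans_eq ?_)
    rw [Multiset.sum_cons]
    abel
  obtain ⟨a, b, hab, hW⟩ := ih R' (Multiset.lt_cons_self _ _)
    (fun e he ↦ hR e (Multiset.mem_cons_of_mem he)) hB'
  rw [Multiset.card_cons, Multiset.sum_cons]
  rcases single_add_single_le_add_single hab with hab₀ | ⟨y, hy, hpair⟩
  · refine ⟨a, b, hab₀.trans le_add_self, (hW.add_left ⟨z, w, hzw, rfl⟩).mono (le_of_eq ?_)⟩
    abel
  · refine ⟨y₁, y, add_le_add le_rfl hy, (hW.add_left ⟨y₁, z, hy₁z, rfl⟩).mono (le_of_eq ?_)⟩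
    rw [hpair]
    abel

theorem exists_adj_of_edgeProdLE_single_add_single {D : σ →₀ ℕ} {s : ℕ} {y₁ y₂ : σ}
    (hD : Finsupp.degree D = 2 * s) (h : G.EdgeProdLE (s + 1) (single y₁ 1 + single y₂ 1 + D))
    (hy : ¬ G.Adj y₁ y₂) : ∃ u, 0 < D u ∧ G.Adj u y₁ := by
  obtain ⟨B, hB, hcard, hle⟩ := h
  -- degrees force the edges to use up the whole monomial
  have hsum : B.sum = single y₁ 1 + single y₂ 1 + D := by
    refine Finsupp.eq_of_le_of_degree_le hle ?_
    simp only [map_add, degree_single, hD, degree_sum_of_isEdgeExponent hB, hcard]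
    omega
  obtain ⟨z, B', hy₁z, hB'⟩ := exists_eq_cons_of_sum_pos hB (v := y₁) (by simp [hsum])
  have hz : 0 < B.sum z := by simp [hB']
  have hzy₂ : y₂ ≠ z := fun h ↦ hy (h ▸ hy₁z)
  refine ⟨z, ?_, hy₁z.symm⟩
  simpa [hsum, single_apply, hy₁z.ne, hzy₂] using hz

end SimpleGraph

open SimpleGraph

variable {k : Type*} [Field k] {G : SimpleGraph σ}

theorem X_mul_X_eq_monomial (i j : σ) :
    (X i * X j : MvPolynomial σ k) = monomial (single i 1 + single j 1) 1 := by
  rw [X, X, monomial_mul, one_mul]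

theorem edgeIdeal_eq_span_monomial_s6 :
    edgeIdeal k G = Ideal.span ((monomial · (1 : k)) '' {d | G.IsEdgeExponent d}) := by
  unfold edgeIdeal
  congr 1
  ext p
  constructor
  · rintro ⟨i, j, hij, rfl⟩
    exact ⟨_, ⟨i, j, hij, rfl⟩, (X_mul_X_eq_monomial i j).symm⟩
  · rintro ⟨d, ⟨i, j, hij, rfl⟩, rfl⟩
    exact ⟨i, j, hij, (X_mul_X_eq_monomial i j).symm⟩

theorem edgeIdeal_pow_eq_span_monomial (s : ℕ) :
    edgeIdeal k G ^ s = Ideal.span ((monomial · (1 : k)) ''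
      {d | ∃ B : Multiset (σ →₀ ℕ), (∀ e ∈ B, G.IsEdgeExponent e) ∧ B.card = s ∧ B.sum = d}) := by
  induction s with
  | zero => simp
  | succ s ih =>
    rw [pow_succ, ih, edgeIdeal_eq_span_monomial_s6, Ideal.span_mul_span']
    congr 1
    ext p
    simp only [Set.mem_mul, Set.mem_image, Set.mem_ofPred_eq]
    constructor
    · rintro ⟨_, ⟨_, ⟨B, hB, rfl, rfl⟩, rfl⟩, _, ⟨e, he, rfl⟩, rfl⟩
      exact ⟨e + B.sum, ⟨e ::ₘ B, Multiset.forall_mem_cons.2 ⟨he, hB⟩, Multiset.card_cons e B,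
        Multiset.sum_cons e B⟩, by rw [monomial_mul, one_mul, add_comm]⟩
    · rintro ⟨_, ⟨B, hB, hcard, rfl⟩, rfl⟩
      obtain ⟨e, B, rfl, rfl⟩ := Multiset.card_eq_succ_iff.1 hcard
      obtain ⟨he, hB⟩ := Multiset.forall_mem_cons.1 hB
      exact ⟨_, ⟨_, ⟨B, hB, rfl, rfl⟩, rfl⟩, _, ⟨e, he, rfl⟩,
        by rw [monomial_mul, one_mul, Multiset.sum_cons, add_comm]⟩

theorem mem_edgeIdeal_pow_iff {s : ℕ} {f : MvPolynomial σ k} :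
    f ∈ edgeIdeal k G ^ s ↔ ∀ d ∈ f.support, G.EdgeProdLE s d := by
  rw [edgeIdeal_pow_eq_span_monomial, mem_ideal_span_monomial_image]
  refine forall₂_congr fun d _ ↦ ⟨?_, ?_⟩
  · rintro ⟨_, ⟨B, hB, hcard, rfl⟩, hle⟩
    exact ⟨B, hB, hcard, hle⟩
  · rintro ⟨B, hB, hcard, hle⟩
    exact ⟨_, ⟨B, hB, hcard, rfl⟩, hle⟩

theorem monomial_mem_edgeIdeal_pow_iff {s : ℕ} {d : σ →₀ ℕ} {c : k} (hc : c ≠ 0) :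
    monomial d c ∈ edgeIdeal k G ^ s ↔ G.EdgeProdLE s d := by
  classical
  simp [mem_edgeIdeal_pow_iff, support_monomial, hc]

theorem edgeIdeal_pow_succ_colon_monomial_sum {R : Multiset (σ →₀ ℕ)}
    (hR : ∀ e ∈ R, G.IsEdgeExponent e) :
    (edgeIdeal k G ^ (R.card + 1)).colon (Ideal.span {monomial R.sum (1 : k)}) =
      edgeIdeal k G ⊔ Ideal.span {p | ∃ y₁ y₂ : σ, (∃ u, 0 < R.sum u ∧ G.Adj u y₁) ∧
        (∃ u, 0 < R.sum u ∧ G.Adj u y₂) ∧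
        X y₁ * X y₂ * monomial R.sum 1 ∈ edgeIdeal k G ^ (R.card + 1) ∧ p = X y₁ * X y₂} := by
  apply le_antisymm
  · intro f hf
    rw [Ideal.mem_colon_span_singleton, mem_edgeIdeal_pow_iff] at hf
    rw [← f.support_sum_monomial_coeff]
    refine Ideal.sum_mem _ fun m hm ↦ ?_
    obtain ⟨y₁, y₂, hle, hy⟩ := G.exists_single_add_single_le_of_edgeProdLE hR
      (hf (m + R.sum) (by rwa [MvPolynomial.mem_support_iff, coeff_mul_monomial, mul_one,
        ← MvPolynomial.mem_support_iff]))
    obtain ⟨m₀, rfl⟩ := exists_add_of_le hle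
    rw [← one_mul (coeff _ f), ← monomial_mul, ← X_mul_X_eq_monomial]
    refine Ideal.mul_mem_right _ _ ?_
    by_cases hadj : G.Adj y₁ y₂
    · exact Ideal.mem_sup_left (Ideal.subset_span ⟨y₁, y₂, hadj, rfl⟩)
    have hdeg := degree_sum_of_isEdgeExponent hR
    refine Ideal.mem_sup_right (Ideal.subset_span ⟨y₁, y₂,
      exists_adj_of_edgeProdLE_single_add_single hdeg hy hadj,
      exists_adj_of_edgeProdLE_single_add_single hdeg (by rwa [add_comm (single y₂ 1)])
        fun h ↦ hadj h.symm, ?_, rfl⟩)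
    rwa [X_mul_X_eq_monomial, monomial_mul, one_mul, monomial_mem_edgeIdeal_pow_iff one_ne_zero]
  · refine sup_le (fun f hf ↦ ?_) (Ideal.span_le.2 ?_)
    · have hM := (monomial_mem_edgeIdeal_pow_iff (k := k) one_ne_zero).2 (edgeProdLE_card_sum hR)
      rw [Ideal.mem_colon_span_singleton, pow_succ, mul_comm f]
      exact Ideal.mul_mem_mul hM hf
    · rintro _ ⟨y₁, y₂, -, -, h, rfl⟩
      exact Ideal.mem_colon_span_singleton.2 h

end

theorem pow_succ_edgeIdeal_colon_prod_general (k : Type*) [Field k] {n : ℕ}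
    (G : SimpleGraph (Fin n)) (t : ℕ) (x : Fin (2 * t) → Fin n)
    (hM : (∏ i, (X (x i) : MvPolynomial (Fin n) k)) ∈ edgeIdeal k G ^ t) :
    (edgeIdeal k G ^ (t + 1)).colon (Ideal.span {∏ i, (X (x i) : MvPolynomial (Fin n) k)}) =
      edgeIdeal k G ⊔
        Ideal.span {m : MvPolynomial (Fin n) k |
          ∃ y₁ y₂ : Fin n, (∃ i, G.Adj (x i) y₁) ∧ (∃ i, G.Adj (x i) y₂) ∧
            (X y₁ * X y₂ * ∏ i, (X (x i) : MvPolynomial (Fin n) k)) ∈ edgeIdeal k G ^ (t + 1) ∧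
            m = X y₁ * X y₂} := by
  have hprod : ∏ i, (X (x i) : MvPolynomial (Fin n) k) = monomial (∑ i, single (x i) 1) 1 := by
    rw [monomial_sum_one]
    rfl
  rw [hprod] at hM ⊢
  obtain ⟨R, hR, rfl, hRle⟩ := (monomial_mem_edgeIdeal_pow_iff one_ne_zero).1 hM
  have hRsum : R.sum = ∑ i, single (x i) 1 := Finsupp.eq_of_le_of_degree_le hRle
    (by simp [map_sum, SimpleGraph.degree_sum_of_isEdgeExponent hR])
  have hN : ∀ y, (∃ u, 0 < R.sum u ∧ G.Adj u y) ↔ ∃ i, G.Adj (x i) y := by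
    simp [hRsum, Finsupp.finsetSum_apply, single_apply, Finset.filter_nonempty_iff]
  rw [← hRsum, edgeIdeal_pow_succ_colon_monomial_sum hR]
  simp_rw [hN]

/-- **Lemma (colon of `I^{t+1}` by a product of `2t` vertices).** If `x_1 ⋯ x_{2t} ∈ I^t`,
then `(I^{t+1} : x_1 ⋯ x_{2t}) = (I, E)` where `E` is generated by all degree-two monomials
`y₁ y₂` supported on `⋃ N(x_i)` with `y₁ y₂ x_1 ⋯ x_{2t} ∈ I^{t+1}`. -/
theorem pow_succ_edgeIdeal_colon_prod (k : Type*) [Field k] {n : ℕ}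
    (G : SimpleGraph (Fin n)) (t : ℕ) (ht : 1 ≤ t) (x : Fin (2 * t) → Fin n)
    (hM : (∏ i, (X (x i) : MvPolynomial (Fin n) k)) ∈ edgeIdeal k G ^ t) :
    (edgeIdeal k G ^ (t + 1)).colon (Ideal.span {∏ i, (X (x i) : MvPolynomial (Fin n) k)}) =
      edgeIdeal k G ⊔
        Ideal.span {m : MvPolynomial (Fin n) k |
          ∃ y₁ y₂ : Fin n, (∃ i, G.Adj (x i) y₁) ∧ (∃ i, G.Adj (x i) y₂) ∧
            (X y₁ * X y₂ * ∏ i, (X (x i) : MvPolynomial (Fin n) k)) ∈ edgeIdeal k G ^ (t + 1) ∧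
            m = X y₁ * X y₂} :=
  pow_succ_edgeIdeal_colon_prod_general k G t x hM
end

section
/- Let I be a monomial ideal in a polynomial ring R over a field, let M be a monomial in R, and let y be a variable of R that does not divide M. Let K be the extension in R of the image of I in R/(y), i.e., the monomial ideal of R generated by those monomial generators of I not divisible by y. Then ((I : M), y) = ((K : M), y). -/
open MvPolynomial

/-!
Substituting `y = 0` is a ring endomorphism `φ` of `R` that is congruent to the identity
modulo `y`, fixes `M` (as `y ∤ M`), and maps `I` into `K` (it kills the generators divisible
by `y` and fixes the others). Hence `f ∈ (I : M)` gives `φ f * M = φ (f * M) ∈ K`, i.e.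
`φ f ∈ (K : M)`, and `f = φ f + (f - φ f) ∈ ((K : M), y)`. The other inclusion is `K ⊆ I`.
-/

theorem Ideal.colon_span_singleton_sup_eq_of_ringHom {R F : Type*} [CommRing R]
    [FunLike F R R] [RingHomClass F R R] (φ : F) {I K J : Ideal R} {M : R}
    (hKI : K ≤ I) (hIK : I ≤ K.comap φ) (hM : φ M = M) (hJ : ∀ f, f - φ f ∈ J) :
    I.colon (Ideal.span {M}) ⊔ J = K.colon (Ideal.span {M}) ⊔ J := by
  refine le_antisymm (sup_le ?_ le_sup_right)
    (sup_le_sup_right (Submodule.colon_mono hKI le_rfl) _)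
  intro f hf
  rw [Ideal.mem_colon_span_singleton] at hf
  have hφf : φ f ∈ K.colon (Ideal.span {M}) := by
    rw [Ideal.mem_colon_span_singleton, ← hM, ← map_mul]
    exact hIK hf
  simpa using Ideal.add_mem _ (Ideal.mem_sup_left hφf) (Ideal.mem_sup_right (hJ f))

namespace MvPolynomial

variable {R σ : Type*} [DecidableEq σ]

noncomputable def killVar [CommSemiring R] (j : σ) : MvPolynomial σ R →ₐ[R] MvPolynomial σ R :=
  aeval (Function.update X j 0)

theorem killVar_monomial_of_apply_eq_zero [CommSemiring R] {j : σ} {s : σ →₀ ℕ} (hs : s j = 0)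
    (a : R) : killVar j (monomial s a) = monomial s a := by
  rw [killVar, aeval_monomial, monomial_eq, C_eq_algebraMap]
  congr 1
  refine Finsupp.prod_congr fun i hi => ?_
  rw [Function.update_of_ne (by rintro rfl; exact Finsupp.mem_support_iff.mp hi hs)]

theorem killVar_monomial_of_apply_ne_zero [CommSemiring R] {j : σ} {s : σ →₀ ℕ} (hs : s j ≠ 0)
    (a : R) : killVar j (monomial s a) = 0 := by
  rw [killVar, aeval_monomial, Finsupp.prod,
    Finset.prod_eq_zero (Finsupp.mem_support_iff.mpr hs) (by simp [zero_pow hs]), mul_zero]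

theorem sub_killVar_mem_span_X [CommRing R] (j : σ) (f : MvPolynomial σ R) :
    f - killVar j f ∈ Ideal.span {X j} := by
  have hquot : (Ideal.Quotient.mkₐ R (Ideal.span {X j})).comp (killVar j) =
      Ideal.Quotient.mkₐ R (Ideal.span {X j}) := by
    refine algHom_ext fun i => ?_
    by_cases hij : i = j
    · subst hij
      simp [killVar, Ideal.Quotient.mk_singleton_self]
    · simp [killVar, Function.update_of_ne hij]
  rw [← Ideal.Quotient.eq, eq_comm]
  exact congrArg (· f) hquot

theorem span_monomial_le_comap_killVar [CommSemiring R] (j : σ) (S : Set (σ →₀ ℕ)) :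
    Ideal.span ((fun s => monomial s (1 : R)) '' S) ≤
      (Ideal.span ((fun s => monomial s (1 : R)) '' {s ∈ S | s j = 0})).comap (killVar j) := by
  refine Ideal.span_le.mpr ?_
  rintro _ ⟨s, hs, rfl⟩
  by_cases hsj : s j = 0
  · rw [SetLike.mem_coe, Ideal.mem_comap, killVar_monomial_of_apply_eq_zero hsj]
    exact Ideal.subset_span ⟨s, ⟨hs, hsj⟩, rfl⟩
  · rw [SetLike.mem_coe, Ideal.mem_comap, killVar_monomial_of_apply_ne_zero hsj]
    exact Ideal.zero_mem _

end MvPolynomial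

/-- **Lemma.** Let `I` be a monomial ideal (generated by the monomials `x^s`, `s ∈ S`),
let `M = x^{m₀}` be a monomial, and let `y = x_j` be a variable not dividing `M`.  If `K`
is the extension in `R` of the image of `I` in `R/(y)` (the ideal generated by the monomial
generators of `I` not divisible by `y`), then `((I : M), y) = ((K : M), y)`. -/
theorem colon_monomial_sup_var_eq (k : Type*) [Field k] {n : ℕ}
    (S : Set (Fin n →₀ ℕ)) (I : Ideal (MvPolynomial (Fin n) k))
    (hI : I = Ideal.span ((fun s => (monomial s (1 : k) : MvPolynomial (Fin n) k)) '' S))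
    (m₀ : Fin n →₀ ℕ) (j : Fin n) (hj : m₀ j = 0)
    (K : Ideal (MvPolynomial (Fin n) k))
    (hK : K = Ideal.span ((fun s => (monomial s (1 : k) : MvPolynomial (Fin n) k)) ''
      {s ∈ S | s j = 0})) :
    I.colon (Ideal.span {monomial m₀ (1 : k)}) ⊔ Ideal.span {X j} =
      K.colon (Ideal.span {monomial m₀ (1 : k)}) ⊔ Ideal.span {X j} := by
  subst hI hK
  exact Ideal.colon_span_singleton_sup_eq_of_ringHom (killVar j)
    (Ideal.span_mono (Set.image_mono (Set.sep_subset _ _)))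
    (span_monomial_le_comap_killVar j S) (killVar_monomial_of_apply_eq_zero hj 1)
    (sub_killVar_mem_span_X j)
end

section
/- Let G be a finite simple graph, let x_1,...,x_r be vertices of G such that the induced subgraph of G on {x_1,...,x_r} is connected, and fix a vertex u in the connected component of G containing x_1,...,x_r. Let {y_1,...,y_s} be a subset of (⋃_{i=1}^{r} N(x_i)) \ {x_1,...,x_r}. Then there exists an ordering of y_1,...,y_s such that for all i < s, the vertices x_1,...,x_r lie in the connected component containing u of the graph obtained from G by deleting the vertices y_1,...,y_i (together with all edges meeting them). -/
/-!
Walk from `u` towards the `x_m` and stop at the first `y_k` met. Extending this walk by an edge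
from `y_k` into `{x_1, ..., x_r}` and then inside that connected set reaches every `x_m` while
meeting no `y_j` other than `y_k`. So any deletion order that puts `y_k` last works.
-/

namespace SimpleGraph

variable {V : Type*} {G : SimpleGraph V}

theorem Preconnected.exists_walk_support_subset_of_induce {X : Set V}
    (hX : (G.induce X).Preconnected) {a b : V} (ha : a ∈ X) (hb : b ∈ X) :
    ∃ W : G.Walk a b, ∀ v ∈ W.support, v ∈ X := by
  obtain ⟨W⟩ := hX ⟨a, ha⟩ ⟨b, hb⟩
  have hW : ∀ v ∈ (W.map (Embedding.induce X).toHom).support, v ∈ X := by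
    rw [Walk.support_map]
    simp +contextual
  exact ⟨_, hW⟩

theorem Preconnected.exists_walk_avoiding_of_induce {X Y : Set V}
    (hX : (G.induce X).Preconnected) (hXY : ∀ x ∈ X, x ∉ Y) {u x' y₀ : V} (hx' : x' ∈ X)
    (W₀ : G.Walk u x') (hW₀ : ∀ v ∈ W₀.support, v ∈ Y → v = y₀) {x : V} (hx : x ∈ X) :
    ∃ W : G.Walk u x, ∀ v ∈ W.support, v ∈ Y → v = y₀ := by
  obtain ⟨W₁, hW₁⟩ := hX.exists_walk_support_subset_of_induce hx' hx
  refine ⟨W₀.append W₁, fun v hv hvY => ?_⟩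
  rcases (Walk.mem_support_append_iff _ _).mp hv with hv | hv
  · exact hW₀ v hv hvY
  · exact absurd hvY (hXY v (hW₁ v hv))

theorem exists_walks_avoiding_all_but_one [DecidableEq V] {X : Set V} {Y : Finset V} {u : V}
    (hX : (G.induce X).Preconnected) (hXY : ∀ x ∈ X, x ∉ Y)
    (hYX : ∀ y ∈ Y, ∃ x ∈ X, G.Adj x y) (hY : Y.Nonempty) (hu : ∀ x ∈ X, G.Reachable u x) :
    ∃ y₀ ∈ Y, ∀ x ∈ X, ∃ W : G.Walk u x, ∀ v ∈ W.support, v ∈ Y → v = y₀ := by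
  rcases X.eq_empty_or_nonempty with rfl | ⟨x₀, hx₀⟩
  · obtain ⟨y₀, hy₀⟩ := hY
    exact ⟨y₀, hy₀, by simp⟩
  obtain ⟨p⟩ := hu x₀ hx₀
  by_cases hp : ∃ y ∈ Y, y ∈ p.support
  · obtain ⟨y₀, hy₀, hmem, hfirst⟩ :=
      p.exists_mem_support_forall_mem_support_imp_eq Y (by simpa [Finset.Nonempty] using hp)
    obtain ⟨x', hx', hadj⟩ := hYX y₀ hy₀
    refine ⟨y₀, hy₀, fun x hx =>
      hX.exists_walk_avoiding_of_induce hXY hx' ((p.takeUntil y₀ hmem).concat hadj.symm) ?_ hx⟩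
    intro v hv hvY
    rw [Walk.support_concat, List.mem_append, List.mem_singleton] at hv
    rcases hv with hv | rfl
    · exact hfirst v hvY hv
    · exact absurd hvY (hXY v hx')
  · obtain ⟨y₀, hy₀⟩ := hY
    exact ⟨y₀, hy₀, fun x hx => hX.exists_walk_avoiding_of_induce hXY hx₀ p
      (fun v hv hvY => absurd ⟨v, hvY, hv⟩ hp) hx⟩

end SimpleGraph

theorem exists_order_neighbors_general {V : Type*} (G : SimpleGraph V)
    (r s : ℕ) (x : Fin r → V) (u : V)
    (hind : (G.induce (Set.range x)).Connected)
    (hu : ∀ m : Fin r, G.Reachable u (x m))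
    (y : Fin s → V) (hyinj : Function.Injective y)
    (hyN : ∀ j : Fin s, ∃ m : Fin r, G.Adj (x m) (y j))
    (hynx : ∀ j : Fin s, ∀ m : Fin r, y j ≠ x m) :
    ∃ σ : Equiv.Perm (Fin s), ∀ i : ℕ, i < s → ∀ m : Fin r,
      ∃ (hu' : u ∈ {v : V | ∀ j : Fin s, (j : ℕ) < i → v ≠ y (σ j)})
        (hx' : x m ∈ {v : V | ∀ j : Fin s, (j : ℕ) < i → v ≠ y (σ j)}),
        (G.induce {v : V | ∀ j : Fin s, (j : ℕ) < i → v ≠ y (σ j)}).Reachable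
          ⟨u, hu'⟩ ⟨x m, hx'⟩ := by
  classical
  rcases Nat.eq_zero_or_pos s with rfl | hs
  · exact ⟨1, fun i hi => absurd hi (Nat.not_lt_zero i)⟩
  obtain ⟨_, hy₀, hwalk⟩ :=
    G.exists_walks_avoiding_all_but_one (Y := Finset.univ.image y) hind.preconnected
      (by rintro _ ⟨m, rfl⟩ hm; obtain ⟨j, -, hj⟩ := Finset.mem_image.mp hm; exact hynx j m hj)
      (by simpa using hyN) ((Finset.univ_nonempty_iff.mpr ⟨⟨0, hs⟩⟩).image y)
      (by rintro _ ⟨m, rfl⟩; exact hu m)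
  obtain ⟨k, -, rfl⟩ := Finset.mem_image.mp hy₀
  let last : Fin s := ⟨s - 1, by omega⟩
  refine ⟨Equiv.swap last k, fun i hi m => ?_⟩
  obtain ⟨W, hW⟩ := hwalk (x m) ⟨m, rfl⟩
  have hWS : ∀ v ∈ W.support, ∀ j : Fin s, (j : ℕ) < i → v ≠ y (Equiv.swap last k j) := by
    rintro v hv j hj rfl
    have hjk : Equiv.swap last k j ≠ k := by
      rw [Ne, Equiv.swap_apply_eq_iff, Equiv.swap_apply_right]
      rintro rfl
      simp only [last] at hj
      omega
    exact hjk (hyinj (hW _ hv (Finset.mem_image_of_mem _ (Finset.mem_univ _))))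
  exact ⟨hWS u W.start_mem_support, hWS _ W.end_mem_support, (W.induce _ hWS).reachable⟩

/-- **Lemma (ordering the neighbors).** Let `G` be a finite simple graph, `x_1, ..., x_r`
vertices whose induced subgraph is connected, `u` a vertex in the connected component of `G`
containing the `x_m`, and `{y_1, ..., y_s}` a subset of `(⋃ N(x_m)) \ {x_1, ..., x_r}`.
Then the `y_j` can be reordered so that for all `i < s`, after deleting the first `i` of the
`y_j` from `G`, the vertices `x_1, ..., x_r` still lie in the connected component
containing `u`. -/
theorem exists_order_neighbors {V : Type*} [Fintype V] (G : SimpleGraph V)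
    (r s : ℕ) (x : Fin r → V) (u : V)
    (hind : (G.induce (Set.range x)).Connected)
    (hu : ∀ m : Fin r, G.Reachable u (x m))
    (y : Fin s → V) (hyinj : Function.Injective y)
    (hyN : ∀ j : Fin s, ∃ m : Fin r, G.Adj (x m) (y j))
    (hynx : ∀ j : Fin s, ∀ m : Fin r, y j ≠ x m) :
    ∃ σ : Equiv.Perm (Fin s), ∀ i : ℕ, i < s → ∀ m : Fin r,
      ∃ (hu' : u ∈ {v : V | ∀ j : Fin s, (j : ℕ) < i → v ≠ y (σ j)})
        (hx' : x m ∈ {v : V | ∀ j : Fin s, (j : ℕ) < i → v ≠ y (σ j)}),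
        (G.induce {v : V | ∀ j : Fin s, (j : ℕ) < i → v ≠ y (σ j)}).Reachable
          ⟨u, hu'⟩ ⟨x m, hx'⟩ :=
  exists_order_neighbors_general G r s x u hind hu y hyinj hyN hynx
end
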